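/- For any ε > 0 small and any 2ε < δ̄ < 1, there exists C = C(δ̄) > 0 such that U(t + ε, z) ≤ (1 + Cε) U(t,z) for all (t,z) ∈ B̄₁ \ B_{δ̄} ⊂ ℝ². -/

import Mathlib

/-!
By the half-angle formula `U(t,z) = √((r + t)/2)`. Writing `r'` for the radius of `(t + ε, z)`,
the identity `r'² - r² = 2tε + ε²` gives
`(r' + t + ε)(r' + r - ε) = (r + t)(r' + r + ε)`, and `r' + r - ε ≥ 2r - 2ε ≥ r ≥ δ̄`, so
`r' + t + ε ≤ (1 + 2ε/δ̄)(r + t) ≤ (1 + ε/δ̄)² (r + t)`; one may take `C = 1/δ̄`.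
-/

open Real

/-- The function `U(t,z) = r^{1/2} cos(θ/2)`. -/
noncomputable def U (p : ℝ × ℝ) : ℝ :=
  Real.sqrt (Real.sqrt (p.1 ^ 2 + p.2 ^ 2)) *
    Real.cos (Complex.arg (p.1 + p.2 * Complex.I) / 2)

lemma U_eq_sqrt (p : ℝ × ℝ) : U p = √((√(p.1 ^ 2 + p.2 ^ 2) + p.1) / 2) := by
  rw [U, cos_half (Complex.neg_pi_lt_arg _).le (Complex.arg_le_pi _), ← sqrt_mul (sqrt_nonneg _),
    ← mul_div_assoc, mul_add, mul_one, ← Complex.norm_add_mul_I, Complex.norm_mul_cos_arg]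
  simp

lemma sqrt_sq_add_sq_add_nonneg (t z : ℝ) : 0 ≤ √(t ^ 2 + z ^ 2) + t := by
  linarith [neg_le_of_abs_le (abs_le_sqrt (le_add_of_nonneg_right (sq_nonneg z) : t ^ 2 ≤ _))]

lemma sqrt_sq_add_sq_sub_le (t z : ℝ) {ε : ℝ} (hε : 0 ≤ ε) :
    √(t ^ 2 + z ^ 2) - ε ≤ √((t + ε) ^ 2 + z ^ 2) := by
  refine le_sqrt_of_sq_le ?_
  nlinarith [sq_sqrt (add_nonneg (sq_nonneg t) (sq_nonneg z)), sqrt_sq_add_sq_add_nonneg t z]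

lemma sqrt_sq_add_sq_add_le {t z ε δ : ℝ} (hδ : 0 < δ) (hε : 0 ≤ ε) (hεδ : 2 * ε ≤ δ)
    (hr : δ ≤ √(t ^ 2 + z ^ 2)) :
    √((t + ε) ^ 2 + z ^ 2) + (t + ε) ≤ (1 + 2 * ε / δ) * (√(t ^ 2 + z ^ 2) + t) := by
  set r := √(t ^ 2 + z ^ 2)
  set r' := √((t + ε) ^ 2 + z ^ 2)
  set D := r' + r - ε
  have hrt : 0 ≤ r + t := sqrt_sq_add_sq_add_nonneg t z
  have hD : δ ≤ D := by linarith [sqrt_sq_add_sq_sub_le t z hε]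
  have hfactor : (r' + (t + ε)) * D = (r + t) * (D + 2 * ε) := by
    linear_combination sq_sqrt (by positivity : 0 ≤ (t + ε) ^ 2 + z ^ 2)
      - sq_sqrt (by positivity : 0 ≤ t ^ 2 + z ^ 2)
  have hratio : D + 2 * ε ≤ (1 + 2 * ε / δ) * D := by
    have : 2 * ε ≤ 2 * ε / δ * D := by
      rw [div_mul_eq_mul_div, le_div_iff₀ hδ]
      exact mul_le_mul_of_nonneg_left hD (by positivity)
    linarith
  refine le_of_mul_le_mul_right ?_ (hδ.trans_le hD)
  calc (r' + (t + ε)) * D = (r + t) * (D + 2 * ε) := hfactor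
    _ ≤ (r + t) * ((1 + 2 * ε / δ) * D) := mul_le_mul_of_nonneg_left hratio hrt
    _ = (1 + 2 * ε / δ) * (r + t) * D := by ring

lemma U_add_le {δ ε : ℝ} (hδ : 0 < δ) (hε : 0 ≤ ε) (hεδ : 2 * ε ≤ δ) {p : ℝ × ℝ}
    (hp : δ ≤ √(p.1 ^ 2 + p.2 ^ 2)) : U (p.1 + ε, p.2) ≤ (1 + δ⁻¹ * ε) * U p := by
  have hc : 0 ≤ 1 + δ⁻¹ * ε := by positivity
  rw [U_eq_sqrt, U_eq_sqrt, ← sqrt_sq hc, ← sqrt_mul (sq_nonneg _)]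
  refine sqrt_le_sqrt ?_
  have h := sqrt_sq_add_sq_add_le hδ hε hεδ hp
  have hrt := sqrt_sq_add_sq_add_nonneg p.1 p.2
  have hcoef : 1 + 2 * ε / δ ≤ (1 + δ⁻¹ * ε) ^ 2 := by
    rw [div_eq_inv_mul]; nlinarith [sq_nonneg (δ⁻¹ * ε)]
  simp only
  linarith [mul_le_mul_of_nonneg_right hcoef hrt]

theorem stmt14_general (δ : ℝ) :
    ∃ C : ℝ, 0 < C ∧ ∀ ε : ℝ, 0 < ε → 2 * ε < δ →
      ∀ p : ℝ × ℝ, p.1 ^ 2 + p.2 ^ 2 ≤ 1 → δ ≤ Real.sqrt (p.1 ^ 2 + p.2 ^ 2) →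
        U (p.1 + ε, p.2) ≤ (1 + C * ε) * U p := by
  rcases lt_or_ge 0 δ with hδ | hδ
  · exact ⟨δ⁻¹, inv_pos.mpr hδ, fun ε hε hεδ p _ hp => U_add_le hδ hε.le hεδ.le hp⟩
  · exact ⟨1, one_pos, fun ε hε hεδ => absurd hεδ (by linarith)⟩

/-- For `0 < δ̄ < 1` there is `C = C(δ̄) > 0` such that for every `ε > 0` with `2ε < δ̄`,
`U(t + ε, z) ≤ (1 + Cε) U(t,z)` in `B̄₁ \ B_{δ̄} ⊂ ℝ²`. -/
theorem stmt14 (δ : ℝ) (hδ1 : δ < 1) :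
    ∃ C : ℝ, 0 < C ∧ ∀ ε : ℝ, 0 < ε → 2 * ε < δ →
      ∀ p : ℝ × ℝ, p.1 ^ 2 + p.2 ^ 2 ≤ 1 → δ ≤ Real.sqrt (p.1 ^ 2 + p.2 ^ 2) →
        U (p.1 + ε, p.2) ≤ (1 + C * ε) * U p :=
  stmt14_general δ
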